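/- (Unbiasedness of hindsight-credited per-reward gradient terms.) Let r : S → ℝ. For every θ ∈ ℝ^d, every state s ∈ S, and every n ≥ 1: Σ_{a∈A} ∇_θ log π_θ(s,a) · Σ_{s'∈S} h_n^θ(a|s,s')·P_n^θ(s,s')·r(s') = Σ_{a∈A} π_θ(s,a)·∇_θ log π_θ(s,a) · Σ_{s'∈S} Pa_n^θ(s,a,s')·r(s'). That is, summing the hindsight-credited score terms over all actions (including counterfactual ones) coincides with the expected REINFORCE score term for the sampled action. -/
import Mathlib


open Finset

noncomputable section
open scoped Classical

/-- n-step state probabilities induced by a policy `π` and a transition kernel `p`: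
`Pn 0 s s' = [s' = s]` and `Pn (n+1) s s' = ∑ a, π s a * ∑ s'', p s a s'' * Pn n s'' s'`. -/
def Pn {S A : Type*} [Fintype S] [Fintype A] (p : S → A → S → ℝ) (π : S → A → ℝ) :
    ℕ → S → S → ℝ
  | 0, s, s' => if s' = s then 1 else 0
  | n + 1, s, s' => ∑ a, π s a * ∑ s'', p s a s'' * Pn p π n s'' s'

/-- Action-conditioned n-step probabilities, defined for indices `n ≥ 1` by
`Pa (n+1) s a s' = ∑ s'', p s a s'' * Pn n s'' s'` (the value at `n = 0` is irrelevant). -/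
def Pa {S A : Type*} [Fintype S] [Fintype A] (p : S → A → S → ℝ) (π : S → A → ℝ) :
    ℕ → S → A → S → ℝ
  | 0, _, _, _ => 0
  | n + 1, s, a, s' => ∑ s'', p s a s'' * Pn p π n s'' s'

/-- Hindsight probability `h_n(a | s, s')`. -/
def hca {S A : Type*} [Fintype S] [Fintype A] (p : S → A → S → ℝ) (π : S → A → ℝ)
    (n : ℕ) (a : A) (s s' : S) : ℝ :=
  if 0 < Pn p π n s s' then π s a * Pa p π n s a s' / Pn p π n s s' else 0

lemma Pn_nonneg {S A : Type*} [Fintype S] [Fintype A] (p : S → A → S → ℝ) (π : S → A → ℝ)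
    (hp0 : ∀ s a s', 0 ≤ p s a s') (hπ0 : ∀ s a, 0 ≤ π s a) :
    ∀ n s s', 0 ≤ Pn p π n s s' := by
  intro n
  induction n with
  | zero => intro s s'; simp [Pn]; split <;> norm_num
  | succ m ih =>
    intro s s'
    apply Finset.sum_nonneg; intro a _
    exact mul_nonneg (hπ0 s a) (Finset.sum_nonneg fun s'' _ =>
      mul_nonneg (hp0 s a s'') (ih s'' s'))

/-- unbiasedness of hindsight-credited per-reward gradient terms.  For a
smoothly parametrized positive policy family `Pol`, summing the hindsight-credited
score terms over all actions coincides with the expected REINFORCE score term. -/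
theorem hindsight_credit_unbiased
    {S A : Type*} [Fintype S] [Fintype A] [Nonempty S] [Nonempty A]
    (p : S → A → S → ℝ)
    (hp0 : ∀ s a s', 0 ≤ p s a s') (hp1 : ∀ s a, ∑ s', p s a s' = 1)
    (d : ℕ) (Pol : EuclideanSpace ℝ (Fin d) → S → A → ℝ)
    (hPolpos : ∀ θ s a, 0 < Pol θ s a) (hPol1 : ∀ θ s, ∑ a, Pol θ s a = 1)
    (hPoldiff : ∀ s a, ContDiff ℝ 1 fun θ => Pol θ s a)
    (r : S → ℝ) (θ : EuclideanSpace ℝ (Fin d)) (s : S) (n : ℕ) (hn : 1 ≤ n) :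
    ∑ a, (∑ s', hca p (Pol θ) n a s s' * Pn p (Pol θ) n s s' * r s') •
        fderiv ℝ (fun θ' => Real.log (Pol θ' s a)) θ =
    ∑ a, (Pol θ s a * ∑ s', Pa p (Pol θ) n s a s' * r s') •
        fderiv ℝ (fun θ' => Real.log (Pol θ' s a)) θ := by
  obtain ⟨m, rfl⟩ : ∃ m, n = m + 1 := ⟨n - 1, by omega⟩
  apply Finset.sum_congr rfl
  intro a _
  congr 1
  rw [Finset.mul_sum]
  apply Finset.sum_congr rfl
  intro s' _
  have hπ0 : ∀ s a, 0 ≤ Pol θ s a := fun s a => (hPolpos θ s a).le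
  have hPa0 : ∀ b, 0 ≤ Pa p (Pol θ) (m+1) s b s' := fun b =>
    Finset.sum_nonneg fun s'' _ => mul_nonneg (hp0 s b s'')
      (Pn_nonneg p (Pol θ) hp0 hπ0 m s'' s')
  by_cases h : 0 < Pn p (Pol θ) (m+1) s s'
  · rw [hca, if_pos h, div_mul_cancel₀ _ (ne_of_gt h), mul_assoc]
  · have hz : Pn p (Pol θ) (m+1) s s' = 0 :=
      le_antisymm (not_lt.1 h) (Pn_nonneg p (Pol θ) hp0 hπ0 (m+1) s s')
    have hsum : ∑ b, Pol θ s b * Pa p (Pol θ) (m+1) s b s' = 0 := by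
      rw [← hz]; rfl
    have hPa : Pol θ s a * Pa p (Pol θ) (m+1) s a s' = 0 := by
      have := (Finset.sum_eq_zero_iff_of_nonneg (fun b _ =>
        mul_nonneg (hπ0 s b) (hPa0 b))).1 hsum a (Finset.mem_univ a)
      exact this
    rw [hca, if_neg h]
    simp [← mul_assoc, hPa]

end
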